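/- arXiv:1207.0586 — 5 statements merged into one kernel-verified Lean document; each statement's English description precedes it below -/
import Mathlib

section
/- The function J₀ is twice differentiable on ℝ and satisfies the Bessel differential equation of order zero: for every x ∈ ℝ, x·J₀''(x) + J₀'(x) + x·J₀(x) = 0. -/
open Real

/-- Bessel function of the first kind of order zero. -/
noncomputable def J0 (x : ℝ) : ℝ := (1 / π) * ∫ t in (0:ℝ)..π, Real.cos (x * Real.sin t)

theorem intervalIntegral.hasDerivAt_integral_of_continuous_of_deriv_le
    {𝕜 E : Type*} [RCLike 𝕜] [NormedAddCommGroup E] [NormedSpace ℝ E] [NormedSpace 𝕜 E]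
    {F F' : 𝕜 → ℝ → E} {a b C : ℝ} (hF : ∀ x, Continuous (F x)) (hF' : ∀ x, Continuous (F' x))
    (h_bound : ∀ x t, ‖F' x t‖ ≤ C) (h_diff : ∀ x t, HasDerivAt (F · t) (F' x t) x) (x₀ : 𝕜) :
    HasDerivAt (fun x => ∫ t in a..b, F x t) (∫ t in a..b, F' x₀ t) x₀ :=
  (hasDerivAt_integral_of_dominated_loc_of_deriv_le (bound := fun _ => C) Filter.univ_mem
    (.of_forall fun x => (hF x).aestronglyMeasurable) ((hF x₀).intervalIntegrable a b)
    (hF' x₀).aestronglyMeasurable (.of_forall fun t _ x _ => h_bound x t)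
    intervalIntegrable_const (.of_forall fun t _ x _ => h_diff x t)).2

open intervalIntegral

lemma hasDerivAt_J0 (x : ℝ) :
    HasDerivAt J0 ((1 / π) * ∫ t in (0:ℝ)..π, -(sin t * sin (x * sin t))) x := by
  refine (hasDerivAt_integral_of_continuous_of_deriv_le (C := 1)
    (F := fun y t => cos (y * sin t)) (F' := fun y t => -(sin t * sin (y * sin t)))
    (by fun_prop) (by fun_prop) (fun y t => ?_) (fun y t => ?_) x).const_mul (1 / π)
  · rw [norm_neg, norm_mul]
    exact mul_le_one₀ (abs_sin_le_one t) (norm_nonneg _) (abs_sin_le_one _)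
  · exact ((hasDerivAt_mul_const (sin t)).cos).congr_deriv (by ring)

lemma deriv_J0 : deriv J0 = fun x => (1 / π) * ∫ t in (0:ℝ)..π, -(sin t * sin (x * sin t)) :=
  funext fun x => (hasDerivAt_J0 x).deriv

lemma hasDerivAt_deriv_J0 (x : ℝ) :
    HasDerivAt (deriv J0)
      ((1 / π) * ∫ t in (0:ℝ)..π, -(sin t ^ 2 * cos (x * sin t))) x := by
  rw [deriv_J0]
  refine (hasDerivAt_integral_of_continuous_of_deriv_le (C := 1)
    (F := fun y t => -(sin t * sin (y * sin t))) (F' := fun y t => -(sin t ^ 2 * cos (y * sin t)))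
    (by fun_prop) (by fun_prop) (fun y t => ?_) (fun y t => ?_) x).const_mul (1 / π)
  · rw [norm_neg, norm_mul, norm_pow]
    exact mul_le_one₀ (pow_le_one₀ (norm_nonneg _) (abs_sin_le_one t)) (norm_nonneg _)
      (abs_cos_le_one _)
  · exact (((hasDerivAt_mul_const (sin t)).sin).const_mul (sin t)).neg.congr_deriv (by ring)

/-- The Bessel combination of the integrands is `d/dt [cos t · sin (x sin t)]`, which vanishes
at `0` and `π`. -/
lemma integral_bessel_combination_eq_zero (x : ℝ) :
    x * (∫ t in (0:ℝ)..π, -(sin t ^ 2 * cos (x * sin t)))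
      + (∫ t in (0:ℝ)..π, -(sin t * sin (x * sin t)))
      + x * ∫ t in (0:ℝ)..π, cos (x * sin t) = 0 := by
  have h_deriv (t : ℝ) : HasDerivAt (fun t => cos t * sin (x * sin t))
      (x * -(sin t ^ 2 * cos (x * sin t)) + -(sin t * sin (x * sin t))
        + x * cos (x * sin t)) t := by
    refine ((hasDerivAt_cos t).mul ((hasDerivAt_sin t).const_mul x).sin).congr_deriv ?_
    linear_combination (x * cos (x * sin t)) * sin_sq_add_cos_sq t
  have h_int : ∀ {f : ℝ → ℝ}, Continuous f → IntervalIntegrable f MeasureTheory.volume 0 π :=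
    fun hf => hf.intervalIntegrable _ _
  rw [← integral_const_mul, ← integral_const_mul, ← integral_add (h_int (by fun_prop))
    (h_int (by fun_prop)), ← integral_add (h_int (by fun_prop)) (h_int (by fun_prop)),
    integral_eq_sub_of_hasDerivAt (fun t _ => h_deriv t) (h_int (by fun_prop))]
  simp

/-- `J₀` is twice differentiable on `ℝ` and satisfies the Bessel
differential equation of order zero: `x·J₀''(x) + J₀'(x) + x·J₀(x) = 0` for all `x`. -/
theorem stmt_3 :
    Differentiable ℝ J0 ∧ Differentiable ℝ (deriv J0) ∧
    ∀ x : ℝ, x * deriv (deriv J0) x + deriv J0 x + x * J0 x = 0 := by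
  refine ⟨fun x => (hasDerivAt_J0 x).differentiableAt,
    fun x => (hasDerivAt_deriv_J0 x).differentiableAt, fun x => ?_⟩
  rw [(hasDerivAt_deriv_J0 x).deriv, (hasDerivAt_J0 x).deriv, J0]
  linear_combination (1 / π) * integral_bessel_combination_eq_zero x
end

section
/- The function J₁ is differentiable on ℝ and satisfies x·J₁'(x) = x·J₀(x) − J₁(x) for every x ∈ ℝ; in particular J₁'(x) = J₀(x) − J₁(x)/x for x ≠ 0. -/
open Real

/-- Bessel function of the first kind of order one. -/
noncomputable def J1 (x : ℝ) : ℝ := (1 / π) * ∫ t in (0:ℝ)..π, Real.cos (t - x * Real.sin t)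

/-!
Differentiating under the integral sign gives `π J₁'(x) = ∫₀^π sin(t - x sin t) sin t dt`.
Writing `φ = t - x sin t`, the addition formula for `cos (t - φ) = cos (x sin t)` gives
`x sin φ sin t = x cos (x sin t) - cos φ + (1 - x cos t) cos φ`, and the last term is the
`t`-derivative of `sin φ`, which vanishes at `t = 0` and `t = π`.
-/

open MeasureTheory intervalIntegral

theorem hasDerivAt_intervalIntegral_of_deriv_bounded {E : Type*} [NormedAddCommGroup E]
    [NormedSpace ℝ E] {μ : Measure ℝ} [IsLocallyFiniteMeasure μ] {F F' : ℝ → ℝ → E}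
    {a b C : ℝ} (hF : ∀ x, Continuous (F x)) (hF' : ∀ x, Continuous (F' x))
    (hderiv : ∀ x t, HasDerivAt (fun x => F x t) (F' x t) x) (hbound : ∀ x t, ‖F' x t‖ ≤ C)
    (x₀ : ℝ) :
    HasDerivAt (fun x => ∫ t in a..b, F x t ∂μ) (∫ t in a..b, F' x₀ t ∂μ) x₀ :=
  (hasDerivAt_integral_of_dominated_loc_of_deriv_le (bound := fun _ => C) Filter.univ_mem
    (.of_forall fun x => (hF x).aestronglyMeasurable) ((hF x₀).intervalIntegrable a b)
    (hF' x₀).aestronglyMeasurable (.of_forall fun t _ x _ => hbound x t)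
    intervalIntegrable_const (.of_forall fun t _ x _ => hderiv x t)).2

theorem hasDerivAt_cos_sub_mul_sin (x t : ℝ) :
    HasDerivAt (fun x => cos (t - x * sin t)) (sin (t - x * sin t) * sin t) x := by
  have hφ : HasDerivAt (fun x => t - x * sin t) (-sin t) x := by
    simpa using ((hasDerivAt_id x).mul_const (sin t)).const_sub t
  simpa [Function.comp_def] using (hasDerivAt_cos _).comp x hφ

theorem hasDerivAt_sin_sub_mul_sin (x t : ℝ) :
    HasDerivAt (fun t => sin (t - x * sin t)) ((1 - x * cos t) * cos (t - x * sin t)) t := by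
  have hφ : HasDerivAt (fun t => t - x * sin t) (1 - x * cos t) t :=
    (hasDerivAt_id t).sub ((hasDerivAt_sin t).const_mul x)
  simpa [Function.comp_def, mul_comm] using (hasDerivAt_sin _).comp t hφ

theorem hasDerivAt_J1 (x : ℝ) :
    HasDerivAt J1 ((1 / π) * ∫ t in (0:ℝ)..π, sin (t - x * sin t) * sin t) x :=
  (hasDerivAt_intervalIntegral_of_deriv_bounded (F := fun x t => cos (t - x * sin t))
    (F' := fun x t => sin (t - x * sin t) * sin t) (C := 1) (by fun_prop) (by fun_prop)
    hasDerivAt_cos_sub_mul_sin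
    (fun _ _ => (norm_mul _ _).trans_le <|
      mul_le_one₀ (abs_sin_le_one _) (norm_nonneg _) (abs_sin_le_one _)) x).const_mul _

theorem integral_one_sub_mul_cos_mul_cos_sub_mul_sin (x : ℝ) :
    ∫ t in (0:ℝ)..π, (1 - x * cos t) * cos (t - x * sin t) = 0 := by
  rw [integral_eq_sub_of_hasDerivAt (fun t _ => hasDerivAt_sin_sub_mul_sin x t)
    (Continuous.intervalIntegrable (by fun_prop) _ _)]
  simp

theorem mul_sin_sub_mul_sin_mul_sin (x t : ℝ) :
    x * (sin (t - x * sin t) * sin t) =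
      x * cos (x * sin t) - cos (t - x * sin t) + (1 - x * cos t) * cos (t - x * sin t) := by
  have : cos (x * sin t) = cos (t - (t - x * sin t)) := by ring_nf
  rw [this, cos_sub]
  ring

theorem mul_integral_sin_sub_mul_sin_mul_sin (x : ℝ) :
    x * ∫ t in (0:ℝ)..π, sin (t - x * sin t) * sin t =
      x * (∫ t in (0:ℝ)..π, cos (x * sin t)) - ∫ t in (0:ℝ)..π, cos (t - x * sin t) := by
  have hint : ∀ f : ℝ → ℝ, Continuous f → IntervalIntegrable f volume 0 π :=
    fun f hf => hf.intervalIntegrable _ _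
  rw [← intervalIntegral.integral_const_mul, integral_congr fun t _ => mul_sin_sub_mul_sin_mul_sin x t,
    integral_add (hint _ (by fun_prop)) (hint _ (by fun_prop)),
    integral_sub (hint _ (by fun_prop)) (hint _ (by fun_prop)), intervalIntegral.integral_const_mul,
    integral_one_sub_mul_cos_mul_cos_sub_mul_sin, add_zero]

/-- `J₁` is differentiable on `ℝ` and satisfies
`x·J₁'(x) = x·J₀(x) − J₁(x)` for every `x`; in particular
`J₁'(x) = J₀(x) − J₁(x)/x` for `x ≠ 0`. -/
theorem stmt_5 :
    Differentiable ℝ J1 ∧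
    (∀ x : ℝ, x * deriv J1 x = x * J0 x - J1 x) ∧
    (∀ x : ℝ, x ≠ 0 → deriv J1 x = J0 x - J1 x / x) := by
  have hrec : ∀ x : ℝ, x * deriv J1 x = x * J0 x - J1 x := by
    intro x
    rw [(hasDerivAt_J1 x).deriv, J0, J1, mul_left_comm, mul_integral_sin_sub_mul_sin_mul_sin]
    ring
  refine ⟨fun x => (hasDerivAt_J1 x).differentiableAt, hrec, fun x hx => ?_⟩
  field_simp
  linarith [hrec x]
end

section
/- The function t ↦ t·(J₀(t)² + J₁(t)²) is differentiable on ℝ and its derivative at every t ∈ ℝ equals J₀(t)² − J₁(t)². -/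
open Real

open intervalIntegral

/-!
Differentiating Bessel's integrals under the integral sign gives
`J₀' = -(1/π) ∫₀^π sin (x sin t) sin t`, which is `-J₁` because the remaining part
`cos t cos (x sin t)` of `cos (t - x sin t)` is odd under `t ↦ π - t`. Integrating the derivative
of `sin (t - x sin t)` over `[0, π]` gives `x J₁' = x J₀ - J₁`. Hence
`(t (J₀² + J₁²))' = J₀² + J₁² - 2 t J₀ J₁ + 2 J₁ (t J₀ - J₁) = J₀² - J₁²`.
-/

theorem hasDerivAt_integral_cos_sub_mul {φ ψ : ℝ → ℝ} (hφ : Continuous φ) (hψ : Continuous ψ)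
    (a b x : ℝ) :
    HasDerivAt (fun x => ∫ t in a..b, cos (φ t - x * ψ t))
      (∫ t in a..b, sin (φ t - x * ψ t) * ψ t) x := by
  have hderiv (t y : ℝ) :
      HasDerivAt (fun y => cos (φ t - y * ψ t)) (sin (φ t - y * ψ t) * ψ t) y := by
    simpa using ((hasDerivAt_mul_const (ψ t)).const_sub (φ t)).cos
  refine (hasDerivAt_integral_of_dominated_loc_of_deriv_le (bound := fun t => |ψ t|)
    Filter.univ_mem (.of_forall fun _ => by fun_prop)
    (Continuous.intervalIntegrable (by fun_prop) a b) (by fun_prop)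
    (.of_forall fun t _ y _ => ?_) (hψ.abs.intervalIntegrable a b)
    (.of_forall fun t _ y _ => hderiv t y)).2
  rw [norm_mul, norm_eq_abs, norm_eq_abs]
  exact mul_le_of_le_one_left (abs_nonneg _) (abs_sin_le_one _)

theorem integral_eq_zero_of_apply_add_sub_eq_neg {f : ℝ → ℝ} {a b : ℝ}
    (hf : ∀ t, f (a + b - t) = -f t) : ∫ t in a..b, f t = 0 := by
  have h := integral_comp_sub_left f (a + b) (a := a) (b := b)
  simp only [hf, integral_neg, add_sub_cancel_right, add_sub_cancel_left] at h
  linarith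

theorem integral_cos_mul_cos_mul_sin (x : ℝ) :
    ∫ t in (0:ℝ)..π, cos t * cos (x * sin t) = 0 :=
  integral_eq_zero_of_apply_add_sub_eq_neg fun t => by
    rw [zero_add, cos_pi_sub, sin_pi_sub, neg_mul]

theorem J1_eq_integral_sin_mul_sin (x : ℝ) :
    J1 x = (1 / π) * ∫ t in (0:ℝ)..π, sin (x * sin t) * sin t := by
  have hsplit (t : ℝ) :
      cos (t - x * sin t) = cos t * cos (x * sin t) + sin (x * sin t) * sin t := by
    rw [cos_sub]; ring
  simp only [J1, hsplit]
  rw [integral_add (Continuous.intervalIntegrable (by fun_prop) _ _)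
    (Continuous.intervalIntegrable (by fun_prop) _ _), integral_cos_mul_cos_mul_sin, zero_add]

theorem hasDerivAt_J0_s6 (x : ℝ) : HasDerivAt J0 (-J1 x) x := by
  have h := (hasDerivAt_integral_cos_sub_mul (φ := fun _ => 0) continuous_const continuous_sin
    0 π x).const_mul (1 / π)
  simp only [zero_sub, cos_neg, sin_neg, neg_mul, integral_neg] at h
  rw [J1_eq_integral_sin_mul_sin, ← mul_neg]
  exact h

theorem integral_J1_recurrence_integrand (x : ℝ) :
    ∫ t in (0:ℝ)..π, (x * (sin (t - x * sin t) * sin t) - x * cos (x * sin t)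
      + cos (t - x * sin t)) = 0 := by
  have hderiv (t : ℝ) : HasDerivAt (fun t => sin (t - x * sin t))
      (x * (sin (t - x * sin t) * sin t) - x * cos (x * sin t) + cos (t - x * sin t)) t := by
    refine ((hasDerivAt_id' t).sub ((hasDerivAt_sin t).const_mul x)).sin.congr_deriv ?_
    rw [Pi.sub_apply, cos_sub, sin_sub]
    linear_combination -x * cos (x * sin t) * sin_sq_add_cos_sq t
  rw [integral_eq_sub_of_hasDerivAt (fun t _ => hderiv t)
    (Continuous.intervalIntegrable (by fun_prop) _ _)]
  simp

-- Multiplied by `x`, the recurrence `J₁' = J₀ - J₁ / x` also holds at `x = 0`.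
theorem hasDerivAt_J1_s6 (x : ℝ) : ∃ d, HasDerivAt J1 d x ∧ x * d = x * J0 x - J1 x := by
  refine ⟨_, (hasDerivAt_integral_cos_sub_mul continuous_id continuous_sin 0 π x).const_mul
    (1 / π), ?_⟩
  have h := integral_J1_recurrence_integrand x
  rw [integral_add (Continuous.intervalIntegrable (by fun_prop) _ _)
      (Continuous.intervalIntegrable (by fun_prop) _ _),
    integral_sub (Continuous.intervalIntegrable (by fun_prop) _ _)
      (Continuous.intervalIntegrable (by fun_prop) _ _),
    integral_const_mul, integral_const_mul] at h
  simp only [J0, J1, id]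
  linear_combination (1 / π) * h

theorem hasDerivAt_mul_J0_sq_add_J1_sq (x : ℝ) :
    HasDerivAt (fun t : ℝ => t * (J0 t ^ 2 + J1 t ^ 2)) (J0 x ^ 2 - J1 x ^ 2) x := by
  obtain ⟨d, hJ1, hd⟩ := hasDerivAt_J1_s6 x
  refine ((hasDerivAt_id' x).mul (((hasDerivAt_J0_s6 x).pow 2).add (hJ1.pow 2))).congr_deriv ?_
  simp only [Pi.add_apply, Pi.pow_apply]
  linear_combination 2 * J1 x * hd

/-- `t ↦ t·(J₀(t)² + J₁(t)²)` is differentiable on `ℝ` and its derivative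
at every `t` equals `J₀(t)² − J₁(t)²`. -/
theorem stmt_6 :
    Differentiable ℝ (fun t : ℝ => t * (J0 t ^ 2 + J1 t ^ 2)) ∧
    ∀ t : ℝ, deriv (fun t : ℝ => t * (J0 t ^ 2 + J1 t ^ 2)) t = J0 t ^ 2 - J1 t ^ 2 :=
  ⟨fun x => (hasDerivAt_mul_J0_sq_add_J1_sq x).differentiableAt,
    fun x => (hasDerivAt_mul_J0_sq_add_J1_sq x).deriv⟩
end

section
/- Let a, b ∈ ℝ with 0 < b < a. Then the improper integral ∫₀^∞ cos(at) J₀(bt) dt converges and equals 0; that is, lim_{T→∞} ∫₀^T cos(at) J₀(bt) dt = 0. -/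
/-!
Since `cos (x sin t)` is `π`-periodic and even in `sin t`, `π J₀(x) = ∫₀^π cos (x cos θ) dθ`, and
the substitution `u = cos θ` turns this into an integral against the Chebyshev measure
`μ = (1 - u²)^{-1/2} du` on `[-1, 1]`. Swapping the `t`- and `θ`-integrals and integrating
`cos (a t) cos (b u t)` explicitly gives
`π ∫₀^T cos (a t) J₀(b t) dt
  = ∫ (sin (a T - b T u) / (2 (a - b u)) + sin (a T + b T u) / (2 (a + b u))) dμ(u)`,
where `|b u| ≤ b < a` keeps the denominators away from `0`. Both terms tend to `0` by the
Riemann–Lebesgue lemma, which applies because `μ` is absolutely continuous.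
-/

open Real Filter Topology

open MeasureTheory
open Polynomial.Chebyshev (measureT integrable_measureT integral_measureT_eq_integral_cos)

section RiemannLebesgue

variable {α : Type*} {l : Filter α} {φ ω : α → ℝ}

theorem tendsto_integral_mul_sin_add {f : ℝ → ℝ} (hf : Integrable f)
    (hω : Tendsto ω l (cocompact ℝ)) :
    Tendsto (fun x ↦ ∫ v, f v * sin (φ x + ω x * v)) l (𝓝 0) := by
  have hW : Tendsto (fun x ↦ -(2 * π)⁻¹ * ω x) l (cocompact ℝ) :=
    (tendsto_cocompact_mul_left₀ (by simp [pi_ne_zero])).comp hω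
  have hF : Tendsto (fun x ↦ ∫ v, Complex.exp (↑(ω x * v) * Complex.I) * f v) l (𝓝 0) := by
    refine ((Real.tendsto_integral_exp_smul_cocompact fun v ↦ (f v : ℂ)).comp hW).congr fun x ↦ ?_
    refine integral_congr_ae (.of_forall fun v ↦ ?_)
    simp only [Circle.smul_def, Real.fourierChar_apply, smul_eq_mul]
    congr 3
    field_simp
  refine squeeze_zero_norm (fun x ↦ ?_) (by simpa only [norm_zero] using hF.norm)
  have hint : Integrable fun v ↦
      Complex.exp (φ x * Complex.I) * (Complex.exp (↑(ω x * v) * Complex.I) * f v) :=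
    (hf.ofReal.bdd_mul (c := 1) (by fun_prop)
      (.of_forall fun v ↦ (Complex.norm_exp_ofReal_mul_I _).le)).const_mul _
  calc ‖∫ v, f v * sin (φ x + ω x * v)‖
      = ‖(Complex.exp (φ x * Complex.I) * ∫ v, Complex.exp (↑(ω x * v) * Complex.I) * f v).im‖ := by
        rw [← integral_const_mul, ← Complex.imCLM_apply,
          ← ContinuousLinearMap.integral_comp_comm _ hint]
        congr 2 with v
        rw [Complex.imCLM_apply, ← mul_assoc, ← Complex.exp_add, ← add_mul, ← Complex.ofReal_add,
          Complex.im_mul_ofReal, Complex.exp_ofReal_mul_I_im, mul_comm]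
    _ ≤ ‖∫ v, Complex.exp (↑(ω x * v) * Complex.I) * f v‖ := by
      rw [Real.norm_eq_abs]
      refine (Complex.abs_im_le_norm _).trans ?_
      rw [norm_mul, Complex.norm_exp_ofReal_mul_I, one_mul]

theorem tendsto_integral_mul_sin_add_of_absolutelyContinuous {μ : Measure ℝ} [SigmaFinite μ]
    (hμ : μ ≪ volume) {f : ℝ → ℝ} (hf : Integrable f μ) (hω : Tendsto ω l (cocompact ℝ)) :
    Tendsto (fun x ↦ ∫ v, f v * sin (φ x + ω x * v) ∂μ) l (𝓝 0) := by
  simpa only [mul_assoc, integral_toReal_rnDeriv_mul hμ] using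
    tendsto_integral_mul_sin_add ((integrable_toReal_rnDeriv_mul_iff hμ).2 hf) hω

end RiemannLebesgue

instance : IsFiniteMeasure measureT :=
  (integrable_const_iff.1 (integrable_measureT (f := fun _ ↦ (1 : ℝ)) continuousOn_const))
    |>.resolve_left one_ne_zero

theorem measureT_absolutelyContinuous : measureT ≪ volume :=
  Measure.restrict_le_self.absolutelyContinuous.trans (withDensity_absolutelyContinuous _ _)

theorem ae_mem_Icc_measureT : ∀ᵐ u ∂measureT, u ∈ Set.Icc (-1 : ℝ) 1 := by
  rw [measureT]
  filter_upwards [ae_restrict_mem measurableSet_Ioc] with u hu using Set.Ioc_subset_Icc_self hu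

theorem integral_comp_sin_eq_integral_comp_cos {E : Type*} [NormedAddCommGroup E]
    [NormedSpace ℝ E] {g : ℝ → E} (hg : ∀ u, g (-u) = g u) :
    ∫ t in 0..π, g (sin t) = ∫ t in 0..π, g (cos t) := by
  have hper : Function.Periodic (fun t ↦ g (sin t)) π := fun t ↦ by simp [sin_add_pi, hg]
  calc ∫ t in 0..π, g (sin t) = ∫ t in π / 2..π / 2 + π, g (sin t) := by
        simpa using hper.intervalIntegral_add_eq 0 (π / 2)
    _ = ∫ t in 0..π, g (cos t) := by
        simpa [add_comm, sin_add_pi_div_two] using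
          (intervalIntegral.integral_comp_add_right (fun t ↦ g (sin t)) (π / 2)
            (a := 0) (b := π)).symm

theorem J0_eq_integral_cos (x : ℝ) : J0 x = (1 / π) * ∫ θ in 0..π, cos (x * cos θ) := by
  rw [J0, integral_comp_sin_eq_integral_comp_cos (g := fun u ↦ cos (x * u)) fun u ↦ by simp]

theorem integral_cos_mul_J0_eq_integral_measureT (a b T : ℝ) :
    ∫ t in 0..T, cos (a * t) * J0 (b * t) =
      (1 / π) * ∫ u, (∫ t in 0..T, cos (a * t) * cos (b * t * u)) ∂measureT := by
  have hint : IntegrableOn (Function.uncurry fun t θ ↦ cos (a * t) * cos (b * t * cos θ))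
      (Set.uIoc 0 T ×ˢ Set.uIoc 0 π) :=
    ((by fun_prop : Continuous _).continuousOn.integrableOn_compact
      (isCompact_uIcc.prod isCompact_uIcc)).mono_set
      (Set.prod_mono Set.uIoc_subset_uIcc Set.uIoc_subset_uIcc)
  simp_rw [J0_eq_integral_cos, mul_left_comm (cos _), ← intervalIntegral.integral_const_mul,
    intervalIntegral.integral_const_mul (1 / π)]
  rw [intervalIntegral_intervalIntegral_swap hint, integral_measureT_eq_integral_cos]

theorem integral_cos_mul_cos {a c : ℝ} (h₁ : a - c ≠ 0) (h₂ : a + c ≠ 0) (T : ℝ) :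
    ∫ t in 0..T, cos (a * t) * cos (c * t) =
      sin ((a - c) * T) / (2 * (a - c)) + sin ((a + c) * T) / (2 * (a + c)) := by
  have hprod : ∀ t, cos (a * t) * cos (c * t) = (cos ((a - c) * t) + cos ((a + c) * t)) / 2 := by
    intro t
    rw [sub_mul, add_mul, cos_sub, cos_add]
    ring
  have hcos : ∀ k ≠ 0, ∫ t in 0..T, cos (k * t) = sin (k * T) / k := fun k hk ↦ by
    simp [intervalIntegral.integral_comp_mul_left _ hk, div_eq_inv_mul]
  simp_rw [hprod, intervalIntegral.integral_div]
  rw [intervalIntegral.integral_add ((by fun_prop : Continuous _).intervalIntegrable _ _)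
    ((by fun_prop : Continuous _).intervalIntegrable _ _), hcos _ h₁, hcos _ h₂]
  field_simp

theorem add_mul_pos_of_abs_lt {a c u : ℝ} (hc : |c| < a) (hu : u ∈ Set.Icc (-1) 1) :
    0 < a + c * u := by
  have : |c * u| ≤ |c| := by
    rw [abs_mul]
    exact mul_le_of_le_one_right (abs_nonneg c) (abs_le.2 hu)
  linarith [neg_abs_le (c * u)]

theorem continuousOn_inv_two_mul_add_mul {a c : ℝ} (hc : |c| < a) :
    ContinuousOn (fun u ↦ (2 * (a + c * u))⁻¹) (Set.Icc (-1) 1) :=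
  ContinuousOn.inv₀ (by fun_prop) fun u hu ↦ by linarith [add_mul_pos_of_abs_lt hc hu]

theorem integral_cos_mul_cos_mul_eq {a c u : ℝ} (hc : |c| < a) (hu : u ∈ Set.Icc (-1) 1)
    (T : ℝ) :
    ∫ t in 0..T, cos (a * t) * cos (c * t * u) =
      (2 * (a + -c * u))⁻¹ * sin (a * T + -c * T * u) +
        (2 * (a + c * u))⁻¹ * sin (a * T + c * T * u) := by
  have h₁ := add_mul_pos_of_abs_lt (c := -c) (by rwa [abs_neg]) hu
  have h₂ := add_mul_pos_of_abs_lt hc hu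
  calc _ = ∫ t in 0..T, cos (a * t) * cos (c * u * t) := by simp_rw [mul_right_comm c _ u]
    _ = _ := by
      rw [integral_cos_mul_cos (by linarith) h₂.ne', div_eq_inv_mul, div_eq_inv_mul]
      ring_nf

theorem integral_cos_mul_J0_eq {a b : ℝ} (hb : |b| < a) (T : ℝ) :
    ∫ t in 0..T, cos (a * t) * J0 (b * t) =
      (1 / π) * ((∫ u, (2 * (a + -b * u))⁻¹ * sin (a * T + -b * T * u) ∂measureT) +
        ∫ u, (2 * (a + b * u))⁻¹ * sin (a * T + b * T * u) ∂measureT) := by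
  have hb' : |-b| < a := by rwa [abs_neg]
  rw [integral_cos_mul_J0_eq_integral_measureT,
    ← integral_add (integrable_measureT ?_) (integrable_measureT ?_)]
  · exact congrArg _ (integral_congr_ae
      (ae_mem_Icc_measureT.mono fun u hu ↦ integral_cos_mul_cos_mul_eq hb hu T))
  · exact (continuousOn_inv_two_mul_add_mul hb').mul (by fun_prop)
  · exact (continuousOn_inv_two_mul_add_mul hb).mul (by fun_prop)

/-- For `0 < b < a`, the improper integral `∫₀^∞ cos(at) J₀(bt) dt`
converges and equals `0`. -/
theorem stmt_10 (a b : ℝ) (hb : 0 < b) (hab : b < a) :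
    Tendsto (fun T : ℝ => ∫ t in (0:ℝ)..T, Real.cos (a * t) * J0 (b * t))
      atTop (𝓝 (0 : ℝ)) := by
  have hab' : |b| < a := by rwa [abs_of_pos hb]
  have hterm : ∀ c, |c| = b → Tendsto
      (fun T ↦ ∫ u, (2 * (a + c * u))⁻¹ * sin (a * T + c * T * u) ∂measureT) atTop (𝓝 0) :=
    fun c hc ↦ tendsto_integral_mul_sin_add_of_absolutelyContinuous measureT_absolutelyContinuous
      (integrable_measureT (continuousOn_inv_two_mul_add_mul (hc ▸ hab)))
      ((tendsto_cocompact_mul_left₀ (abs_pos.1 (hc ▸ hb))).comp atTop_le_cocompact)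
  simpa using (((hterm (-b) (by rw [abs_neg, abs_of_pos hb])).add
    (hterm b (abs_of_pos hb))).const_mul (1 / π)).congr fun T ↦ (integral_cos_mul_J0_eq hab' T).symm
end

section
/- Let k ∈ ℝ. The radial function u : ℝ² \ {0} → ℝ, u(x) = J₀(k‖x‖), is twice continuously differentiable on ℝ² \ {0} and satisfies the Helmholtz equation ∂²u/∂x₁²(x) + ∂²u/∂x₂²(x) + k² u(x) = 0 for every x ∈ ℝ² with x ≠ 0. -/
/-!
Differentiating under the integral sign, `π J₀⁽ⁿ⁾(x) = ∫₀^π sinⁿ t cos (x sin t + n π/2) dt`,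
so `J₀` is smooth, and the integrand of `x J₀'' + J₀' + x J₀` is the exact derivative
`d/dt (cos t sin (x sin t))`, whence Bessel's equation. For a radial function `f(‖x‖)` on `ℝ²` the
sum of the two second partials is `f''(ρ) + f'(ρ)/ρ`; with `f(r) = J₀(k r)` Bessel's equation turns
this into `-k² f(ρ)`.
-/

open Real

open intervalIntegral MeasureTheory
open scoped ContDiff

noncomputable def besselIntegrand (n : ℕ) (x t : ℝ) : ℝ :=
  sin t ^ n * cos (x * sin t + n * (π / 2))

/-- `besselAux n = π J₀⁽ⁿ⁾`. -/
noncomputable def besselAux (n : ℕ) (x : ℝ) : ℝ :=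
  ∫ t in (0:ℝ)..π, besselIntegrand n x t

lemma continuous_besselIntegrand (n : ℕ) (x : ℝ) : Continuous (besselIntegrand n x) := by
  unfold besselIntegrand; fun_prop

lemma abs_besselIntegrand_le_one (n : ℕ) (x t : ℝ) : |besselIntegrand n x t| ≤ 1 := by
  rw [besselIntegrand, abs_mul, abs_pow]
  exact mul_le_one₀ (pow_le_one₀ (abs_nonneg _) (abs_sin_le_one t)) (abs_nonneg _)
    (abs_cos_le_one _)

lemma hasDerivAt_besselIntegrand (n : ℕ) (x t : ℝ) :
    HasDerivAt (fun x => besselIntegrand n x t) (besselIntegrand (n + 1) x t) x := by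
  have hphase : cos (x * sin t + ((n + 1 : ℕ) : ℝ) * (π / 2)) = -sin (x * sin t + n * (π / 2)) := by
    rw [← cos_add_pi_div_two]; push_cast; ring_nf
  refine ((((hasDerivAt_mul_const (x := x) (sin t)).add_const ((n : ℝ) * (π / 2))).cos).const_mul
    (sin t ^ n)).congr_deriv ?_
  unfold besselIntegrand
  rw [hphase]; ring

lemma hasDerivAt_besselAux (n : ℕ) (x : ℝ) : HasDerivAt (besselAux n) (besselAux (n + 1) x) x :=
  (hasDerivAt_integral_of_dominated_loc_of_deriv_le (bound := fun _ => 1) Filter.univ_mem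
    (Filter.Eventually.of_forall fun y => (continuous_besselIntegrand n y).aestronglyMeasurable)
    ((continuous_besselIntegrand n x).intervalIntegrable 0 π)
    (continuous_besselIntegrand (n + 1) x).aestronglyMeasurable
    (Filter.Eventually.of_forall fun t _ y _ => abs_besselIntegrand_le_one (n + 1) y t)
    intervalIntegrable_const
    (Filter.Eventually.of_forall fun t _ y _ => hasDerivAt_besselIntegrand n y t)).2

lemma contDiff_besselAux (n : ℕ) : ContDiff ℝ ∞ (besselAux n) := by
  refine contDiff_infty.2 fun m => ?_
  induction m generalizing n with
  | zero =>
    exact contDiff_zero.2 (continuous_iff_continuousAt.2 fun x =>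
      (hasDerivAt_besselAux n x).continuousAt)
  | succ m ih =>
    have hderiv : deriv (besselAux n) = besselAux (n + 1) :=
      funext fun x => (hasDerivAt_besselAux n x).deriv
    rw [Nat.cast_succ, contDiff_succ_iff_deriv, hderiv]
    exact ⟨fun x => (hasDerivAt_besselAux n x).differentiableAt, by simp, ih (n + 1)⟩

lemma besselAux_ode (x : ℝ) : x * besselAux 2 x + besselAux 1 x + x * besselAux 0 x = 0 := by
  have hint : ∀ n, IntervalIntegrable (besselIntegrand n x) volume 0 π :=
    fun n => (continuous_besselIntegrand n x).intervalIntegrable 0 π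
  have hprim : ∀ t ∈ Set.uIcc (0:ℝ) π, HasDerivAt (fun t => cos t * sin (x * sin t))
      (x * besselIntegrand 2 x t + besselIntegrand 1 x t + x * besselIntegrand 0 x t) t := by
    intro t _
    refine ((hasDerivAt_cos t).mul (((hasDerivAt_sin t).const_mul x).sin)).congr_deriv ?_
    simp only [besselIntegrand]
    push_cast
    rw [zero_mul, add_zero, show x * sin t + 2 * (π / 2) = x * sin t + π by ring, cos_add_pi,
      show x * sin t + 1 * (π / 2) = x * sin t + π / 2 by ring, cos_add_pi_div_two]
    linear_combination x * cos (x * sin t) * sin_sq_add_cos_sq t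
  simp only [besselAux, ← intervalIntegral.integral_const_mul]
  rw [← integral_add ((hint 2).const_mul x) (hint 1),
    ← integral_add (((hint 2).const_mul x).add (hint 1)) ((hint 0).const_mul x),
    integral_eq_sub_of_hasDerivAt hprim
      ((((hint 2).const_mul x).add (hint 1)).add ((hint 0).const_mul x))]
  simp

lemma J0_eq_besselAux (x : ℝ) : J0 x = besselAux 0 x / π := by
  simp [J0, besselAux, besselIntegrand, div_eq_inv_mul]

lemma contDiff_J0 : ContDiff ℝ ∞ J0 := by
  simpa only [funext J0_eq_besselAux] using (contDiff_besselAux 0).div_const π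

lemma hasDerivAt_J0_comp_mul (k r : ℝ) :
    HasDerivAt (fun r => J0 (k * r)) (k * besselAux 1 (k * r) / π) r := by
  have h := ((hasDerivAt_besselAux 0 (k * r)).div_const π).comp r (hasDerivAt_const_mul k)
  simp only [← funext J0_eq_besselAux] at h
  refine h.congr_deriv ?_
  ring

lemma hasDerivAt_deriv_J0_comp_mul (k r : ℝ) :
    HasDerivAt (fun r => k * besselAux 1 (k * r) / π) (k ^ 2 * besselAux 2 (k * r) / π) r := by
  refine ((((hasDerivAt_besselAux 1 (k * r)).comp r (hasDerivAt_const_mul k)).const_mul k).div_const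
    π).congr_deriv ?_
  ring

lemma J0_comp_mul_ode (k : ℝ) {r : ℝ} (hr : 0 < r) :
    k ^ 2 * besselAux 2 (k * r) / π + k * besselAux 1 (k * r) / π / r + k ^ 2 * J0 (k * r) = 0 := by
  rw [J0_eq_besselAux]
  field_simp
  linear_combination k * besselAux_ode (k * r)

lemma hasDerivAt_sqrt_sq_add_sq {a : ℝ} (c : ℝ) (h : 0 < a ^ 2 + c ^ 2) :
    HasDerivAt (fun r => √(r ^ 2 + c ^ 2)) (a / √(a ^ 2 + c ^ 2)) a := by
  refine (((hasDerivAt_pow 2 a).add_const (c ^ 2)).sqrt h.ne').congr_deriv ?_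
  field_simp
  ring

lemma deriv_deriv_comp_sqrt_sq_add_sq {f f' : ℝ → ℝ} {f'' a c : ℝ} (h : 0 < a ^ 2 + c ^ 2)
    (hf : ∀ r, 0 < r → HasDerivAt f (f' r) r) (hf' : HasDerivAt f' f'' √(a ^ 2 + c ^ 2)) :
    deriv (fun s => deriv (fun r => f √(r ^ 2 + c ^ 2)) s) a
      = f'' * (a / √(a ^ 2 + c ^ 2)) ^ 2
        + f' √(a ^ 2 + c ^ 2) * (c ^ 2 / √(a ^ 2 + c ^ 2) ^ 3) := by
  have hfirst : (fun s => deriv (fun r => f √(r ^ 2 + c ^ 2)) s)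
      =ᶠ[nhds a] fun s => f' √(s ^ 2 + c ^ 2) * (s / √(s ^ 2 + c ^ 2)) := by
    filter_upwards [(by fun_prop : Continuous fun s : ℝ => s ^ 2 + c ^ 2).continuousAt.eventually
      (eventually_gt_nhds h)] with s hs
    exact ((hf _ (sqrt_pos.2 hs)).comp s (hasDerivAt_sqrt_sq_add_sq c hs)).deriv
  have hρ : 0 < √(a ^ 2 + c ^ 2) := sqrt_pos.2 h
  have hρsq : √(a ^ 2 + c ^ 2) ^ 2 = a ^ 2 + c ^ 2 := sq_sqrt h.le
  rw [hfirst.deriv_eq]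
  refine HasDerivAt.deriv (((hf'.comp a (hasDerivAt_sqrt_sq_add_sq c h)).mul
    ((hasDerivAt_id' a).div (hasDerivAt_sqrt_sq_add_sq c h) hρ.ne')).congr_deriv ?_)
  simp only [Pi.div_apply, Function.comp_apply]
  field_simp
  linear_combination (f' √(a ^ 2 + c ^ 2)) * hρsq

lemma laplacian_comp_sqrt_sq_add_sq {f f' : ℝ → ℝ} {f'' a b : ℝ} (h : 0 < a ^ 2 + b ^ 2)
    (hf : ∀ r, 0 < r → HasDerivAt f (f' r) r) (hf' : HasDerivAt f' f'' √(a ^ 2 + b ^ 2)) :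
    deriv (fun s => deriv (fun r => f √(r ^ 2 + b ^ 2)) s) a
      + deriv (fun s => deriv (fun r => f √(a ^ 2 + r ^ 2)) s) b
      = f'' + f' √(a ^ 2 + b ^ 2) / √(a ^ 2 + b ^ 2) := by
  have hswap : (fun r => f √(a ^ 2 + r ^ 2)) = fun r => f √(r ^ 2 + a ^ 2) := by
    simp only [add_comm (a ^ 2)]
  rw [hswap, deriv_deriv_comp_sqrt_sq_add_sq h hf hf', deriv_deriv_comp_sqrt_sq_add_sq
    (by linarith) hf (by rwa [add_comm (b ^ 2)]), add_comm (b ^ 2)]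
  have hρsq : √(a ^ 2 + b ^ 2) ^ 2 = a ^ 2 + b ^ 2 := sq_sqrt h.le
  field_simp
  linear_combination -(f'' * √(a ^ 2 + b ^ 2) + f' √(a ^ 2 + b ^ 2)) * hρsq

lemma sq_add_sq_pos_of_ne_zero {x : ℝ × ℝ} (hx : x ≠ 0) : 0 < x.1 ^ 2 + x.2 ^ 2 := by
  rcases x with ⟨a, b⟩
  have : a ≠ 0 ∨ b ≠ 0 := by contrapose! hx; simp [hx]
  rcases this with h | h <;> positivity

/-- For `k ∈ ℝ`, the radial function `u(x) = J₀(k‖x‖)` is twice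
continuously differentiable on `ℝ² \ {0}` and satisfies the Helmholtz equation
`∂²u/∂x₁² + ∂²u/∂x₂² + k²u = 0` at every `x ≠ 0`. -/
theorem stmt_16 (k : ℝ) (u : ℝ × ℝ → ℝ)
    (hu : ∀ x : ℝ × ℝ, u x = J0 (k * Real.sqrt (x.1 ^ 2 + x.2 ^ 2))) :
    ContDiffOn ℝ 2 u {x : ℝ × ℝ | x ≠ 0} ∧
    ∀ x : ℝ × ℝ, x ≠ 0 →
      deriv (fun s : ℝ => deriv (fun r : ℝ => u (r, x.2)) s) x.1 +
        deriv (fun s : ℝ => deriv (fun r : ℝ => u (x.1, r)) s) x.2 +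
        k ^ 2 * u x = 0 := by
  obtain rfl : u = fun x => J0 (k * √(x.1 ^ 2 + x.2 ^ 2)) := funext hu
  refine ⟨fun x hx => ?_, fun x hx => ?_⟩
  · have hradius : ContDiffAt ℝ 2 (fun x : ℝ × ℝ => k * √(x.1 ^ 2 + x.2 ^ 2)) x :=
      contDiffAt_const.mul (((contDiff_fst.pow 2).add (contDiff_snd.pow 2)).contDiffAt.sqrt
        (sq_add_sq_pos_of_ne_zero hx).ne')
    exact ((contDiff_J0.of_le (WithTop.coe_le_coe.2 le_top)).contDiffAt.comp x
      hradius).contDiffWithinAt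
  · have hpos := sq_add_sq_pos_of_ne_zero hx
    rw [laplacian_comp_sqrt_sq_add_sq hpos (fun r _ => hasDerivAt_J0_comp_mul k r)
      (hasDerivAt_deriv_J0_comp_mul k _)]
    exact J0_comp_mul_ode k (sqrt_pos.2 hpos)
end
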